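/- arXiv:2510.25313 — 3 statements merged into one kernel-verified Lean document; each statement's English description precedes it below -/
import Mathlib

section
/- For every density matrix ρ on ℂ^d one has M_Re(ρ) ≤ 1 − √2/2; moreover, for the qubit pure state |+i⟩ = (|0⟩ + i|1⟩)/√2, the value M_Re(|+i⟩⟨+i|) = 1 − √2/2 is attained. -/
open Matrix Complex ComplexOrder Classical

/-- The positive semidefinite square root of a matrix (junk value `0` if not PSD). -/
noncomputable def psqrt {n : Type*} [Fintype n] [DecidableEq n] (A : Matrix n n ℂ) :
    Matrix n n ℂ :=
  if h : A.PosSemidef then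
    (h.1.eigenvectorUnitary : Matrix n n ℂ) * diagonal ((↑) ∘ Real.sqrt ∘ h.1.eigenvalues) *
      (star h.1.eigenvectorUnitary : Matrix n n ℂ) else 0

/-- Entrywise complex conjugate of a matrix. -/
def mconj {m n : Type*} (A : Matrix m n ℂ) : Matrix m n ℂ := A.map (starRingEnd ℂ)

/-- Fidelity `F(ρ,σ) = Tr √(√ρ σ √ρ)`. -/
noncomputable def fidelity {n : Type*} [Fintype n] [DecidableEq n] (ρ σ : Matrix n n ℂ) : ℝ :=
  ((psqrt (psqrt ρ * σ * psqrt ρ)).trace).re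

/-- The real part state `Re(ρ) = (ρ + ρ*)/2`. -/
noncomputable def reState {n : Type*} (ρ : Matrix n n ℂ) : Matrix n n ℂ :=
  ((1 : ℂ)/2) • (ρ + mconj ρ)

/-- The imaginarity measure `M_Re(ρ) = 1 - F(ρ, Re(ρ))`. -/
noncomputable def MRe {n : Type*} [Fintype n] [DecidableEq n] (ρ : Matrix n n ℂ) : ℝ :=
  1 - fidelity ρ (reState ρ)

/-- A density matrix: positive semidefinite with trace 1. -/
def IsDensityMatrix {n : Type*} [Fintype n] (ρ : Matrix n n ℂ) : Prop :=
  ρ.PosSemidef ∧ ρ.trace = 1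

/-!
The conjugate `ρ*` of a state is again positive semidefinite, so `Re(ρ) ≥ ρ / 2`. Fidelity is
monotone in its second argument, because conjugation by `√ρ`, the operator square root and the
trace all are, and `F(ρ, ρ / 2) = Tr ρ / √2`. For the projection `ρ = |+i⟩⟨+i|` one has
`Re(ρ) = 1 / 2` and `√ρ = ρ`, so `F(ρ, Re(ρ)) = Tr √ρ / √2 = 1 / √2` and the bound is attained.
-/

open scoped MatrixOrder Matrix.Norms.L2Operator

lemma Real.sqrt_inv_two : √(2⁻¹ : ℝ) = √2 / 2 := by
  rw [Real.sqrt_inv, ← one_div, Real.sqrt_div_self']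

lemma CFC.sqrt_smul {A : Type*} [CStarAlgebra A] [PartialOrder A] [StarOrderedRing A] {a : A}
    (ha : 0 ≤ a) {t : ℝ} (ht : 0 ≤ t) : CFC.sqrt (t • a) = √t • CFC.sqrt a := by
  refine CFC.sqrt_unique ?_ (smul_nonneg (Real.sqrt_nonneg t) (CFC.sqrt_nonneg a))
  rw [smul_mul_smul_comm, Real.mul_self_sqrt ht, CFC.sqrt_mul_sqrt_self a ha]

section

variable {n : Type*}

lemma Matrix.re_trace_le_re_trace [Fintype n] {A B : Matrix n n ℂ} (h : A ≤ B) :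
    A.trace.re ≤ B.trace.re := by
  have := (Complex.nonneg_iff.mp (Matrix.le_iff.mp h).trace_nonneg).1
  rwa [trace_sub, sub_re, sub_nonneg] at this

lemma mconj_nonneg {ρ : Matrix n n ℂ} (hρ : 0 ≤ ρ) : 0 ≤ mconj ρ := by
  rw [nonneg_iff_posSemidef] at hρ ⊢
  have hT : mconj ρ = ρᵀ := by
    ext i j
    simpa [mconj] using congrFun (congrFun hρ.1 j) i
  exact hT ▸ hρ.transpose

lemma reState_eq (ρ : Matrix n n ℂ) : reState ρ = (2⁻¹ : ℝ) • ρ + (2⁻¹ : ℝ) • mconj ρ := by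
  rw [reState, smul_add]
  norm_num [← Complex.coe_smul]

variable [Fintype n] [DecidableEq n]

-- Off the positive semidefinite cone both square roots are `0`.
lemma psqrt_eq_cfcSqrt (A : Matrix n n ℂ) : psqrt A = CFC.sqrt A := by
  by_cases h : A.PosSemidef
  · rw [CFC.sqrt_eq_real_sqrt A h.nonneg, cfcₙ_eq_cfc (hf := Real.continuous_sqrt.continuousOn)
      (hf0 := Real.sqrt_zero), h.1.cfc_eq, IsHermitian.cfc, Unitary.conjStarAlgAut_apply,
      psqrt, dif_pos h]
    rfl
  · rw [psqrt, dif_neg h, CFC.sqrt_of_not_nonneg (by rwa [nonneg_iff_posSemidef])]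

lemma fidelity_eq (ρ σ : Matrix n n ℂ) :
    fidelity ρ σ = (CFC.sqrt (CFC.sqrt ρ * σ * CFC.sqrt ρ)).trace.re := by
  simp only [fidelity, psqrt_eq_cfcSqrt]

lemma fidelity_mono_right (ρ : Matrix n n ℂ) {σ₁ σ₂ : Matrix n n ℂ} (h : σ₁ ≤ σ₂) :
    fidelity ρ σ₁ ≤ fidelity ρ σ₂ := by
  rw [fidelity_eq, fidelity_eq]
  exact re_trace_le_re_trace <| CFC.sqrt_le_sqrt _ _ <|
    conjugate_le_conjugate_of_nonneg h (CFC.sqrt_nonneg ρ)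

lemma fidelity_smul_right (ρ : Matrix n n ℂ) {σ : Matrix n n ℂ} (hσ : 0 ≤ σ) {t : ℝ}
    (ht : 0 ≤ t) : fidelity ρ (t • σ) = √t * fidelity ρ σ := by
  have hconj : 0 ≤ CFC.sqrt ρ * σ * CFC.sqrt ρ := by
    simpa using conjugate_le_conjugate_of_nonneg hσ (CFC.sqrt_nonneg ρ)
  rw [fidelity_eq, fidelity_eq, Matrix.mul_smul, Matrix.smul_mul, CFC.sqrt_smul hconj ht,
    trace_smul, Complex.real_smul, re_ofReal_mul]

lemma fidelity_self {ρ : Matrix n n ℂ} (hρ : 0 ≤ ρ) : fidelity ρ ρ = ρ.trace.re := by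
  have hQQ := CFC.sqrt_mul_sqrt_self ρ hρ
  have hsq : CFC.sqrt ρ * ρ * CFC.sqrt ρ = ρ * ρ :=
    calc CFC.sqrt ρ * ρ * CFC.sqrt ρ
        = CFC.sqrt ρ * (CFC.sqrt ρ * CFC.sqrt ρ) * CFC.sqrt ρ := by rw [hQQ]
      _ = (CFC.sqrt ρ * CFC.sqrt ρ) * (CFC.sqrt ρ * CFC.sqrt ρ) := by simp only [mul_assoc]
      _ = ρ * ρ := by rw [hQQ]
  rw [fidelity_eq, hsq, CFC.sqrt_mul_self ρ hρ]

lemma fidelity_one_right {ρ : Matrix n n ℂ} (hρ : 0 ≤ ρ) :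
    fidelity ρ 1 = (CFC.sqrt ρ).trace.re := by
  rw [fidelity_eq, mul_one, CFC.sqrt_mul_sqrt_self ρ hρ]

lemma smul_le_reState {ρ : Matrix n n ℂ} (hρ : 0 ≤ ρ) : (2⁻¹ : ℝ) • ρ ≤ reState ρ := by
  rw [reState_eq]
  exact le_add_of_nonneg_right (smul_nonneg (by norm_num) (mconj_nonneg hρ))

lemma MRe_le {ρ : Matrix n n ℂ} (hρ : IsDensityMatrix ρ) : MRe ρ ≤ 1 - √2 / 2 := by
  obtain ⟨hpsd, htr⟩ := hρ
  have hF : √2 / 2 ≤ fidelity ρ (reState ρ) :=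
    calc √2 / 2 = fidelity ρ ((2⁻¹ : ℝ) • ρ) := by
          rw [fidelity_smul_right ρ hpsd.nonneg (by norm_num), fidelity_self hpsd.nonneg, htr,
            one_re, mul_one, Real.sqrt_inv_two]
      _ ≤ fidelity ρ (reState ρ) := fidelity_mono_right ρ (smul_le_reState hpsd.nonneg)
  rw [MRe]
  linarith

end

/-- The pure state `|+i⟩⟨+i|` with `|+i⟩ = (|0⟩ + i|1⟩) / √2`. -/
noncomputable abbrev plusIState : Matrix (Fin 2) (Fin 2) ℂ :=
  !![1/2, -Complex.I/2; Complex.I/2, 1/2]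

lemma plusIState_mul_self : plusIState * plusIState = plusIState := by
  ext i j
  fin_cases i <;> fin_cases j <;>
    simp [Matrix.mul_apply, Fin.sum_univ_two, Complex.ext_iff] <;> norm_num

lemma plusIState_nonneg : 0 ≤ plusIState := by
  have hH : plusIStateᴴ = plusIState := by
    ext i j
    fin_cases i <;> fin_cases j <;> simp
  rw [nonneg_iff_posSemidef, ← plusIState_mul_self]
  simpa [hH] using posSemidef_conjTranspose_mul_self plusIState

lemma trace_plusIState : plusIState.trace = 1 := by
  simp [trace_fin_two]
  norm_num

lemma reState_plusIState : reState plusIState = (2⁻¹ : ℝ) • 1 := by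
  ext i j
  fin_cases i <;> fin_cases j <;>
    simp [reState, mconj, Complex.ext_iff, map_ofNat] <;>
    norm_num [Complex.div_re, Complex.div_im]

lemma MRe_plusIState : MRe plusIState = 1 - √2 / 2 := by
  have hsqrt : CFC.sqrt plusIState = plusIState :=
    CFC.sqrt_unique plusIState_mul_self plusIState_nonneg
  rw [MRe, reState_plusIState, fidelity_smul_right _ PosSemidef.one.nonneg (by norm_num),
    fidelity_one_right plusIState_nonneg, hsqrt, trace_plusIState, one_re, mul_one,
    Real.sqrt_inv_two]

theorem stmt1 :
    (∀ (d : ℕ) (ρ : Matrix (Fin d) (Fin d) ℂ), IsDensityMatrix ρ →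
      MRe ρ ≤ 1 - Real.sqrt 2 / 2) ∧
    MRe (!![1/2, -Complex.I/2; Complex.I/2, 1/2] : Matrix (Fin 2) (Fin 2) ℂ) =
      1 - Real.sqrt 2 / 2 :=
  ⟨fun _ _ hρ => MRe_le hρ, MRe_plusIState⟩
end

section
/- For every density matrix ρ on ℂ^d, M_Re(ρ) ≤ 1 − √(P(ρ) − M_tr(ρ)²), where √ denotes the real square root (the quantity P(ρ) − M_tr(ρ)² being taken when nonnegative; equivalently, (1 − M_Re(ρ))² + M_tr(ρ)² ≥ P(ρ)). -/
open Matrix Complex ComplexOrder Classical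

/-- The trace norm `‖A‖_tr = Tr √(Aᴴ A)`. -/
noncomputable def trNorm {n : Type*} [Fintype n] [DecidableEq n] (A : Matrix n n ℂ) : ℝ :=
  ((psqrt (Aᴴ * A)).trace).re

/-- The trace norm imaginarity `M_tr(ρ) = (1/2)‖ρ - ρ*‖_tr`. -/
noncomputable def Mtr {n : Type*} [Fintype n] [DecidableEq n] (ρ : Matrix n n ℂ) : ℝ :=
  (1/2) * trNorm (ρ - mconj ρ)

/-- The purity `P(ρ) = Tr(ρ²)`. -/
noncomputable def purity {n : Type*} [Fintype n] [DecidableEq n] (ρ : Matrix n n ℂ) : ℝ :=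
  ((ρ * ρ).trace).re

/-! For positive semidefinite `X`, `Tr(X²) ≤ (Tr X)²`, since its eigenvalues are nonnegative.
With `X = √(√ρ Re(ρ) √ρ)` this gives `F² ≥ Tr(ρ Re(ρ)) = (P + c)/2`, and with `X = |ρ - ρ*|` it
gives `4 M_tr² ≥ Tr((ρ - ρ*)²) = 2P - 2c`, where `c = Re Tr(ρ ρᵀ)` because `ρ* = ρᵀ` for Hermitian
`ρ`. Adding the two bounds eliminates `c`: `F² + M_tr² ≥ P`. -/

open scoped MatrixOrder

section Sqrt

variable {n : Type*} [Fintype n] [DecidableEq n] {A : Matrix n n ℂ}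

lemma psqrt_eq_sqrt (hA : A.PosSemidef) : psqrt A = CFC.sqrt A := by
  rw [CFC.sqrt_eq_real_sqrt A hA.nonneg, cfcₙ_eq_cfc, hA.1.cfc_eq, IsHermitian.cfc,
    Unitary.conjStarAlgAut_apply, psqrt, dif_pos hA]
  rfl

lemma psqrt_posSemidef (A : Matrix n n ℂ) : (psqrt A).PosSemidef := by
  by_cases hA : A.PosSemidef
  · rw [psqrt_eq_sqrt hA]
    exact (CFC.sqrt_nonneg A).posSemidef
  · rw [psqrt, dif_neg hA]
    exact .zero

lemma psqrt_mul_self (hA : A.PosSemidef) : psqrt A * psqrt A = A := by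
  rw [psqrt_eq_sqrt hA]
  exact CFC.sqrt_mul_sqrt_self A hA.nonneg

end Sqrt

lemma Matrix.PosSemidef.re_trace_mul_self_le_sq {𝕜 n : Type*} [RCLike 𝕜] [Fintype n]
    {A : Matrix n n 𝕜} (hA : A.PosSemidef) :
    RCLike.re (A * A).trace ≤ RCLike.re A.trace ^ 2 := by
  classical
  set U : Matrix n n 𝕜 := (hA.1.eigenvectorUnitary : Matrix n n 𝕜)
  set D : Matrix n n 𝕜 := diagonal (RCLike.ofReal ∘ hA.1.eigenvalues)
  have hUU : star U * U = 1 := Unitary.coe_star_mul_self _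
  have hsq : A * A = U * (D * D) * star U := by
    conv_lhs => rw [hA.1.spectral_theorem, Unitary.conjStarAlgAut_apply]
    simp only [Matrix.mul_assoc]
    rw [← Matrix.mul_assoc (star U) U, hUU, Matrix.one_mul]
  have hsq_tr : (A * A).trace = ∑ i, ((hA.1.eigenvalues i ^ 2 : ℝ) : 𝕜) := by
    rw [hsq, Matrix.trace_mul_cycle, hUU, Matrix.one_mul, diagonal_mul_diagonal, trace_diagonal]
    simp [sq]
  rw [hsq_tr, hA.1.trace_eq_sum_eigenvalues]
  simp only [map_sum, RCLike.ofReal_re]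
  exact Finset.sum_sq_le_sq_sum_of_nonneg fun i _ => hA.eigenvalues_nonneg i

section Fidelity

variable {n : Type*} [Fintype n] [DecidableEq n]

lemma re_trace_le_sq_re_trace_psqrt {A : Matrix n n ℂ} (hA : A.PosSemidef) :
    A.trace.re ≤ (psqrt A).trace.re ^ 2 := by
  have h := (psqrt_posSemidef A).re_trace_mul_self_le_sq
  rwa [psqrt_mul_self hA] at h

lemma fidelity_nonneg (ρ σ : Matrix n n ℂ) : 0 ≤ fidelity ρ σ :=
  Complex.nonneg_iff.mp (psqrt_posSemidef _).trace_nonneg |>.1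

lemma re_trace_mul_le_fidelity_sq {ρ σ : Matrix n n ℂ} (hρ : ρ.PosSemidef) (hσ : σ.PosSemidef) :
    (ρ * σ).trace.re ≤ fidelity ρ σ ^ 2 := by
  have hM : (psqrt ρ * σ * psqrt ρ).PosSemidef := by
    simpa only [(psqrt_posSemidef ρ).1.eq] using hσ.conjTranspose_mul_mul_same (psqrt ρ)
  calc (ρ * σ).trace.re = (psqrt ρ * σ * psqrt ρ).trace.re := by
        rw [Matrix.trace_mul_cycle, psqrt_mul_self hρ]
    _ ≤ fidelity ρ σ ^ 2 := re_trace_le_sq_re_trace_psqrt hM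

lemma re_trace_conjTranspose_mul_self_le_trNorm_sq (A : Matrix n n ℂ) :
    (Aᴴ * A).trace.re ≤ trNorm A ^ 2 :=
  re_trace_le_sq_re_trace_psqrt (posSemidef_conjTranspose_mul_self A)

end Fidelity

lemma Matrix.IsHermitian.mconj_eq_transpose {n : Type*} {ρ : Matrix n n ℂ} (hρ : ρ.IsHermitian) :
    mconj ρ = ρᵀ := by
  ext i j
  rw [mconj, map_apply, transpose_apply, ← hρ.apply i j]
  exact star_star _

lemma reState_posSemidef {n : Type*} {ρ : Matrix n n ℂ} (hρ : ρ.PosSemidef) :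
    (reState ρ).PosSemidef := by
  rw [reState, hρ.1.mconj_eq_transpose]
  exact (hρ.add hρ.transpose).smul (by norm_num [Complex.le_def])

section RealPart

variable {n : Type*} [Fintype n] [DecidableEq n] {ρ : Matrix n n ℂ}

lemma re_trace_mul_reState (hρ : ρ.IsHermitian) :
    (ρ * reState ρ).trace.re = (purity ρ + (ρ * ρᵀ).trace.re) / 2 := by
  rw [reState, hρ.mconj_eq_transpose, Matrix.mul_smul, Matrix.mul_add, trace_smul, trace_add,
    smul_eq_mul, purity, one_div_mul_eq_div, Complex.div_ofNat_re, Complex.add_re]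

lemma re_trace_sub_mconj_sq (hρ : ρ.IsHermitian) :
    ((ρ - mconj ρ)ᴴ * (ρ - mconj ρ)).trace.re = 2 * purity ρ - 2 * (ρ * ρᵀ).trace.re := by
  have hsub : (ρ - ρᵀ)ᴴ = ρ - ρᵀ := (hρ.sub hρ.transpose).eq
  rw [hρ.mconj_eq_transpose, hsub, sub_mul, mul_sub, mul_sub, trace_sub, trace_sub, trace_sub,
    ← transpose_mul, trace_transpose, trace_mul_comm ρᵀ ρ, purity]
  simp only [Complex.sub_re]
  ring

end RealPart

theorem stmt13 (d : ℕ) (ρ : Matrix (Fin d) (Fin d) ℂ) (hρ : IsDensityMatrix ρ) :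
    MRe ρ ≤ 1 - Real.sqrt (purity ρ - Mtr ρ ^ 2) := by
  obtain ⟨hpsd, -⟩ := hρ
  have hF := re_trace_mul_le_fidelity_sq hpsd (reState_posSemidef hpsd)
  have hT := re_trace_conjTranspose_mul_self_le_trNorm_sq (ρ - mconj ρ)
  rw [re_trace_mul_reState hpsd.1] at hF
  rw [re_trace_sub_mconj_sq hpsd.1] at hT
  have hsum : purity ρ - Mtr ρ ^ 2 ≤ fidelity ρ (reState ρ) ^ 2 := by
    rw [Mtr]
    linarith
  rw [MRe, sub_le_sub_iff_left]
  exact (Real.sqrt_le_left (fidelity_nonneg _ _)).mpr hsum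
end

section
/- Let ρ be a density matrix on ℂ^d and define U(ρ,σ) = Tr(ρσ) + √((1 − Tr(ρ²))(1 − Tr(σ²))). Then for every real density matrix σ on ℂ^d (σ positive semidefinite, Tr σ = 1, σ = σ*), one has U(ρ,σ) ≤ 1/d + (1/(2d))·√( 4(d−1)² − 2d(d−1)·(Tr(ρ²) − Tr(ρ·ρ*)) ). -/
open Matrix Complex ComplexOrder Classical

/-- `U(ρ,σ) = Tr(ρσ) + √((1 - Tr(ρ²))(1 - Tr(σ²)))`. -/
noncomputable def Ufun {n : Type*} [Fintype n] [DecidableEq n] (ρ σ : Matrix n n ℂ) : ℝ :=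
  ((ρ * σ).trace).re +
    Real.sqrt ((1 - ((ρ * ρ).trace).re) * (1 - ((σ * σ).trace).re))

/-!
Because σ is real, Tr(ρσ) = Tr(Re(ρ) σ) with Re(ρ) = (ρ + ρ*)/2, a Hermitian matrix of trace one
whose purity is Tr(Re(ρ)²) = (Tr ρ² + Tr ρρ*)/2. Cauchy–Schwarz for the Hilbert–Schmidt inner
product, applied to the traceless parts Re(ρ) − I/d and σ − I/d, gives
Tr(ρσ) ≤ 1/d + √(Tr Re(ρ)² − 1/d) · √(Tr σ² − 1/d). A second, two-dimensional Cauchy–Schwarz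
merges this product with √(1 − Tr ρ²) · √(1 − Tr σ²) into
√((1 − 1/d − (Tr ρ² − Tr ρρ*)/2)(1 − 1/d)), which is the second summand of the bound.
-/

lemma mconj_mul {l m n : Type*} [Fintype m] (A : Matrix l m ℂ) (B : Matrix m n ℂ) :
    mconj (A * B) = mconj A * mconj B := by
  ext i j
  simp [mconj, Matrix.mul_apply, map_sum]

lemma conjTranspose_mconj {m n : Type*} (A : Matrix m n ℂ) : (mconj A)ᴴ = mconj Aᴴ := by
  ext i j
  simp [mconj]

lemma Matrix.IsHermitian.reState {n : Type*} {ρ : Matrix n n ℂ} (hρ : ρ.IsHermitian) :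
    (reState ρ).IsHermitian := by
  rw [_root_.reState, IsHermitian, conjTranspose_smul, conjTranspose_add, conjTranspose_mconj,
    hρ.eq]
  simp

lemma Complex.inv_natCast_re (k : ℕ) : ((k : ℂ)⁻¹).re = (k : ℝ)⁻¹ := by
  rw [← ofReal_natCast, ← ofReal_inv, ofReal_re]

variable {n : Type*} [Fintype n]

lemma trace_mconj (A : Matrix n n ℂ) : (mconj A).trace = starRingEnd ℂ A.trace := by
  simp [mconj, Matrix.trace, map_sum]

lemma trace_conjStarAlgAut [DecidableEq n] (U : unitary (Matrix n n ℂ)) (X : Matrix n n ℂ) :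
    (Unitary.conjStarAlgAut ℂ _ U X).trace = X.trace := by
  rw [Unitary.conjStarAlgAut_apply, trace_mul_cycle, Unitary.coe_star_mul_self, one_mul]

lemma Matrix.IsHermitian.trace_mul_self [DecidableEq n] {A : Matrix n n ℂ} (hA : A.IsHermitian) :
    (A * A).trace = ∑ i, ((hA.eigenvalues i ^ 2 : ℝ) : ℂ) := by
  conv_lhs => rw [hA.spectral_theorem, ← map_mul, trace_conjStarAlgAut]
  simp [diagonal_mul_diagonal, trace_diagonal, sq]

lemma Matrix.PosSemidef.re_trace_mul_self_le_one [DecidableEq n] {ρ : Matrix n n ℂ}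
    (hρ : ρ.PosSemidef) (htr : ρ.trace = 1) : ((ρ * ρ).trace).re ≤ 1 := by
  have hsum : ∑ i, hρ.1.eigenvalues i = 1 := by
    have h := hρ.1.trace_eq_sum_eigenvalues.symm.trans htr
    rw [← RCLike.ofReal_sum] at h
    exact Complex.ofReal_eq_one.mp h
  rw [hρ.1.trace_mul_self, ← ofReal_sum, ofReal_re]
  calc ∑ i, hρ.1.eigenvalues i ^ 2 ≤ (∑ i, hρ.1.eigenvalues i) ^ 2 :=
        Finset.sum_sq_le_sq_sum_of_nonneg fun i _ => hρ.eigenvalues_nonneg i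
    _ = 1 := by rw [hsum, one_pow]

lemma inner_toLp_uncurry_eq_trace (A B : Matrix n n ℂ) :
    inner ℂ (WithLp.toLp 2 (Function.uncurry A)) (WithLp.toLp 2 (Function.uncurry B)) =
      (Aᴴ * B).trace := by
  simp only [PiLp.inner_apply, RCLike.inner_apply, Fintype.sum_prod_type, Matrix.trace,
    Matrix.diag_apply, Matrix.mul_apply, Matrix.conjTranspose_apply]
  rw [Finset.sum_comm]
  exact Finset.sum_congr rfl fun _ _ => Finset.sum_congr rfl fun _ _ => mul_comm _ _

lemma Matrix.IsHermitian.re_trace_mul_self_nonneg {X : Matrix n n ℂ} (hX : X.IsHermitian) :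
    0 ≤ ((X * X).trace).re := by
  simpa [hX.eq] using (re_le_re (posSemidef_conjTranspose_mul_self X).trace_nonneg)

lemma Matrix.IsHermitian.re_trace_mul_le {X Y : Matrix n n ℂ} (hX : X.IsHermitian)
    (hY : Y.IsHermitian) :
    ((X * Y).trace).re ≤ √((X * X).trace).re * √((Y * Y).trace).re := by
  set x : EuclideanSpace ℂ (n × n) := WithLp.toLp 2 (Function.uncurry X)
  set y : EuclideanSpace ℂ (n × n) := WithLp.toLp 2 (Function.uncurry Y)
  calc ((X * Y).trace).re = RCLike.re (inner ℂ x y) := by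
        rw [inner_toLp_uncurry_eq_trace, hX.eq]; rfl
    _ ≤ ‖x‖ * ‖y‖ := re_inner_le_norm x y
    _ = _ := by
        rw [norm_eq_sqrt_re_inner (𝕜 := ℂ), norm_eq_sqrt_re_inner (𝕜 := ℂ),
          inner_toLp_uncurry_eq_trace, inner_toLp_uncurry_eq_trace, hX.eq, hY.eq]
        rfl

section Centered

variable [DecidableEq n] {M N : Matrix n n ℂ}

lemma trace_sub_smul_one_mul_sub_smul_one (hM : M.trace = 1) (hN : N.trace = 1) :
    ((M - (Fintype.card n : ℂ)⁻¹ • 1) * (N - (Fintype.card n : ℂ)⁻¹ • 1)).trace =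
      (M * N).trace - (Fintype.card n : ℂ)⁻¹ := by
  simp only [sub_mul, mul_sub, Matrix.smul_mul, Matrix.mul_smul, Matrix.one_mul,
    trace_sub, trace_smul, trace_one, hM, hN, smul_eq_mul, mul_one, smul_smul]
  have h := mul_self_mul_inv (Fintype.card n : ℂ)⁻¹
  rw [inv_inv] at h
  rw [h]
  ring

lemma Matrix.IsHermitian.sub_inv_card_smul_one (hM : M.IsHermitian) :
    (M - (Fintype.card n : ℂ)⁻¹ • 1).IsHermitian :=
  hM.sub (isHermitian_one.smul (by simp [IsSelfAdjoint]))

lemma inv_card_le_re_trace_mul_self (hM : M.IsHermitian) (htr : M.trace = 1) :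
    (Fintype.card n : ℝ)⁻¹ ≤ ((M * M).trace).re := by
  have h := hM.sub_inv_card_smul_one.re_trace_mul_self_nonneg
  rw [trace_sub_smul_one_mul_sub_smul_one htr htr, sub_re, Complex.inv_natCast_re] at h
  linarith

lemma re_trace_mul_le_inv_card_add (hM : M.IsHermitian) (hN : N.IsHermitian)
    (htrM : M.trace = 1) (htrN : N.trace = 1) :
    ((M * N).trace).re ≤ (Fintype.card n : ℝ)⁻¹ +
      √(((M * M).trace).re - (Fintype.card n : ℝ)⁻¹) *
        √(((N * N).trace).re - (Fintype.card n : ℝ)⁻¹) := by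
  have h := hM.sub_inv_card_smul_one.re_trace_mul_le hN.sub_inv_card_smul_one
  rw [trace_sub_smul_one_mul_sub_smul_one htrM htrN, trace_sub_smul_one_mul_sub_smul_one htrM htrM,
    trace_sub_smul_one_mul_sub_smul_one htrN htrN] at h
  simp only [sub_re, Complex.inv_natCast_re] at h
  linarith

end Centered

section reState

variable {ρ : Matrix n n ℂ}

lemma trace_reState : (reState ρ).trace = (ρ.trace.re : ℂ) := by
  rw [reState, trace_smul, trace_add, trace_mconj, add_conj]
  simp

lemma re_trace_reState_mul {σ : Matrix n n ℂ} (hσ : σ = mconj σ) :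
    ((reState ρ * σ).trace).re = ((ρ * σ).trace).re := by
  rw [reState, smul_mul, trace_smul, add_mul, trace_add]
  nth_rewrite 2 [hσ]
  rw [← mconj_mul, trace_mconj, add_conj]
  simp

lemma re_trace_reState_mul_self :
    ((reState ρ * reState ρ).trace).re =
      (((ρ * ρ).trace).re + ((ρ * mconj ρ).trace).re) / 2 := by
  have hswap : (mconj ρ * ρ).trace = (ρ * mconj ρ).trace := trace_mul_comm _ _
  simp only [reState, smul_mul, Matrix.mul_smul, trace_smul, add_mul, mul_add, trace_add, hswap,
    ← mconj_mul, trace_mconj, smul_eq_mul]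
  norm_num [add_re]
  ring

end reState

lemma sqrt_mul_sqrt_add_sqrt_mul_sqrt_le {a b c e : ℝ} (ha : 0 ≤ a) (hb : 0 ≤ b) (hc : 0 ≤ c)
    (he : 0 ≤ e) : √a * √b + √c * √e ≤ √((a + c) * (b + e)) := by
  apply Real.le_sqrt_of_sq_le
  nlinarith [sq_nonneg (√a * √e - √c * √b), Real.sq_sqrt ha, Real.sq_sqrt hb, Real.sq_sqrt hc,
    Real.sq_sqrt he]

lemma IsDensityMatrix.card_pos {ρ : Matrix n n ℂ} (hρ : IsDensityMatrix ρ) :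
    0 < Fintype.card n := by
  rw [Fintype.card_pos_iff]
  by_contra h
  rw [not_nonempty_iff] at h
  simpa [trace] using hρ.2

lemma Ufun_le_of_eq_mconj [DecidableEq n] {ρ σ : Matrix n n ℂ} (hρ : IsDensityMatrix ρ)
    (hσ : IsDensityMatrix σ) (hσreal : σ = mconj σ) :
    Ufun ρ σ ≤ (Fintype.card n : ℝ)⁻¹ + √((1 - (Fintype.card n : ℝ)⁻¹ -
      (((ρ * ρ).trace).re - ((ρ * mconj ρ).trace).re) / 2) * (1 - (Fintype.card n : ℝ)⁻¹)) := by
  obtain ⟨hρpos, hρtr⟩ := hρ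
  obtain ⟨hσpos, hσtr⟩ := hσ
  have hAtr : (reState ρ).trace = 1 := by rw [trace_reState, hρtr, one_re, ofReal_one]
  have hcs := re_trace_mul_le_inv_card_add hρpos.1.reState hσpos.1 hAtr hσtr
  have hAge := inv_card_le_re_trace_mul_self hρpos.1.reState hAtr
  have hσge := inv_card_le_re_trace_mul_self hσpos.1 hσtr
  rw [re_trace_reState_mul hσreal, re_trace_reState_mul_self] at hcs
  rw [re_trace_reState_mul_self] at hAge
  have hρle := hρpos.re_trace_mul_self_le_one hρtr
  have hσle := hσpos.re_trace_mul_self_le_one hσtr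
  set c := (Fintype.card n : ℝ)⁻¹
  set T := ((ρ * ρ).trace).re
  set S := ((ρ * mconj ρ).trace).re
  set Q := ((σ * σ).trace).re
  calc Ufun ρ σ = ((ρ * σ).trace).re + √(1 - T) * √(1 - Q) := by
        rw [Ufun, Real.sqrt_mul (by linarith)]
    _ ≤ c + (√((T + S) / 2 - c) * √(Q - c) + √(1 - T) * √(1 - Q)) := by linarith
    _ ≤ c + √(((T + S) / 2 - c + (1 - T)) * (Q - c + (1 - Q))) := by
        gcongr
        exact sqrt_mul_sqrt_add_sqrt_mul_sqrt_le (by linarith) (by linarith) (by linarith)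
          (by linarith)
    _ = _ := by congr 2; ring

theorem stmt16 (d : ℕ) (ρ σ : Matrix (Fin d) (Fin d) ℂ) (hρ : IsDensityMatrix ρ)
    (hσ : IsDensityMatrix σ) (hσreal : σ = mconj σ) :
    Ufun ρ σ ≤ 1 / (d : ℝ) + (1 / (2 * (d : ℝ))) *
      Real.sqrt (4 * ((d : ℝ) - 1) ^ 2 -
        2 * (d : ℝ) * ((d : ℝ) - 1) * (((ρ * ρ).trace).re - ((ρ * mconj ρ).trace).re)) := by
  have hd : (0 : ℝ) < d := by exact_mod_cast Fintype.card_fin d ▸ hρ.card_pos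
  refine (Ufun_le_of_eq_mconj hρ hσ hσreal).trans_eq ?_
  rw [Fintype.card_fin, one_div, ← Real.sqrt_sq (by positivity : 0 ≤ 1 / (2 * (d : ℝ))),
    ← Real.sqrt_mul (sq_nonneg _)]
  congr 2
  field_simp
  ring
end
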